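/- arXiv:0901.1753 — 6 statements merged into one kernel-verified Lean document; each statement's English description precedes it below -/
import Mathlib

section
/- Let 0 ≤ p ≤ 1/2 and s be a natural number. Then the binomial tail ∑_{q = ⌈s/2⌉}^{s} C(s,q)·p^q·(1-p)^(s-q) ≤ (2·√(p·(1-p)))^s. -/
theorem stmt_3 (p : ℝ) (hp0 : 0 ≤ p) (hp : p ≤ 1/2) (s : ℕ) :
    ∑ q ∈ Finset.Icc ((s + 1) / 2) s, (s.choose q : ℝ) * p ^ q * (1 - p) ^ (s - q)
      ≤ (2 * Real.sqrt (p * (1 - p))) ^ s := by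
  have h1p : (0:ℝ) ≤ 1 - p := by linarith
  have hpq : p ≤ 1 - p := by linarith
  have hmul : 0 ≤ p * (1 - p) := mul_nonneg hp0 h1p
  set r := Real.sqrt (p * (1 - p)) with hrdef
  have hr : 0 ≤ r := Real.sqrt_nonneg _
  have key : ∀ q ∈ Finset.Icc ((s + 1) / 2) s,
      (s.choose q : ℝ) * p ^ q * (1 - p) ^ (s - q) ≤ (s.choose q : ℝ) * r ^ s := by
    intro q hq
    rw [Finset.mem_Icc] at hq
    have hq1 : q ≤ s := hq.2
    have ha : (0:ℝ) ≤ p ^ q * (1 - p) ^ (s - q) :=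
      mul_nonneg (pow_nonneg hp0 _) (pow_nonneg h1p _)
    have hb : p ^ q * (1 - p) ^ (s - q) ≤ r ^ s := by
      have hsq : (p ^ q * (1 - p) ^ (s - q)) ^ 2 ≤ (r ^ s) ^ 2 := by
        have hr2 : (r ^ s) ^ 2 = (p * (1 - p)) ^ s := by
          rw [← pow_mul, mul_comm s 2, pow_mul, Real.sq_sqrt hmul]
        rw [hr2, mul_pow, ← pow_mul, ← pow_mul]
        have hds : 2 * q - s ≤ s := by omega
        have e1 : q * 2 = s + (2 * q - s) := by omega
        have e2 : (s - q) * 2 = s - (2 * q - s) := by omega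
        set d := 2 * q - s with hd
        calc p ^ (q*2) * (1 - p) ^ ((s-q)*2)
            = p ^ s * (p ^ d * (1-p)^(s-d)) := by rw [e1, e2, pow_add]; ring
          _ ≤ p ^ s * ((1-p) ^ d * (1-p)^(s-d)) := by
              apply mul_le_mul_of_nonneg_left _ (pow_nonneg hp0 _)
              exact mul_le_mul_of_nonneg_right (pow_le_pow_left₀ hp0 hpq d)
                (pow_nonneg h1p _)
          _ = (p * (1-p)) ^ s := by
              rw [mul_pow, ← pow_add, Nat.add_sub_cancel' hds]
      exact (pow_le_pow_iff_left₀ ha (pow_nonneg hr s) two_ne_zero).mp hsq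
    calc (s.choose q : ℝ) * p ^ q * (1 - p) ^ (s - q)
        = (s.choose q : ℝ) * (p ^ q * (1 - p) ^ (s - q)) := by ring
      _ ≤ (s.choose q : ℝ) * r ^ s :=
          mul_le_mul_of_nonneg_left hb (Nat.cast_nonneg _)
  calc ∑ q ∈ Finset.Icc ((s + 1) / 2) s, (s.choose q : ℝ) * p ^ q * (1 - p) ^ (s - q)
      ≤ ∑ q ∈ Finset.Icc ((s + 1) / 2) s, (s.choose q : ℝ) * r ^ s :=
        Finset.sum_le_sum key
    _ ≤ ∑ q ∈ Finset.range (s + 1), (s.choose q : ℝ) * r ^ s := by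
        apply Finset.sum_le_sum_of_subset_of_nonneg
        · intro x hx
          rw [Finset.mem_Icc] at hx
          rw [Finset.mem_range]
          omega
        · intro i _ _
          exact mul_nonneg (Nat.cast_nonneg _) (pow_nonneg hr _)
    _ = (2 : ℝ) ^ s * r ^ s := by
        rw [← Finset.sum_mul]
        norm_cast
        rw [Nat.sum_range_choose]
    _ = (2 * r) ^ s := (mul_pow 2 r s).symm
end

section
/- Let 0 ≤ p ≤ 1/2, 0 ≤ ε ≤ 1, p₁ = ε + 2(1-ε)√(p(1-p)), and let Pr(E^c_s) denote the probability that a Binomial(s, p) variable is strictly less than s/2 plus half the probability it equals s/2 (for even s). Then for every natural number N, ∑_{s=0}^{N} C(N,s)·ε^(N-s)·(1-ε)^s·Pr(E^c_s) ≥ 1 - p₁^N. -/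
theorem stmt_5 (p ε : ℝ) (hp0 : 0 ≤ p) (hp : p ≤ 1/2) (hε0 : 0 ≤ ε) (hε : ε ≤ 1)
    (PrEc : ℕ → ℝ)
    (hPrEc : ∀ s : ℕ,
      PrEc s =
        (∑ q ∈ (Finset.range (s + 1)).filter (fun q => 2 * q < s),
            (s.choose q : ℝ) * p ^ q * (1 - p) ^ (s - q))
          + (if Even s then
              (1 / 2) * (s.choose (s / 2) : ℝ) * p ^ (s / 2) * (1 - p) ^ (s / 2)
            else 0))
    (N : ℕ) :
    ∑ s ∈ Finset.range (N + 1),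
        (N.choose s : ℝ) * ε ^ (N - s) * (1 - ε) ^ s * PrEc s
      ≥ 1 - (ε + 2 * (1 - ε) * Real.sqrt (p * (1 - p))) ^ N := by
  set r := Real.sqrt (p * (1 - p)) with hrdef
  have hp1 : p ≤ 1 - p := by linarith
  have hp1' : 0 ≤ 1 - p := by linarith
  have hr0 : 0 ≤ r := Real.sqrt_nonneg _
  have hpr : p ≤ r := by
    have h := Real.sqrt_le_sqrt (show p * p ≤ p * (1 - p) by nlinarith)
    rwa [Real.sqrt_mul_self hp0] at h
  have hr2 : r ^ 2 = p * (1 - p) := Real.sq_sqrt (by nlinarith)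
  have hbin : ∀ s : ℕ,
      ∑ q ∈ Finset.range (s + 1), (s.choose q : ℝ) * p ^ q * (1 - p) ^ (s - q) = 1 := by
    intro s
    calc ∑ q ∈ Finset.range (s + 1), (s.choose q : ℝ) * p ^ q * (1 - p) ^ (s - q)
        = ∑ q ∈ Finset.range (s + 1), p ^ q * (1 - p) ^ (s - q) * (s.choose q : ℝ) :=
          Finset.sum_congr rfl (fun q _ => by ring)
      _ = (p + (1 - p)) ^ s := (add_pow p (1 - p) s).symm
      _ = 1 := by norm_num
  have key : ∀ s : ℕ, 1 - (2 * r) ^ s ≤ PrEc s := by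
    intro s
    rw [hPrEc s]
    have hsplit := Finset.sum_filter_add_sum_filter_not (Finset.range (s + 1))
      (fun q => 2 * q < s) (fun q => (s.choose q : ℝ) * p ^ q * (1 - p) ^ (s - q))
    rw [hbin s] at hsplit
    -- bound the upper-tail sum
    have htail : ∑ q ∈ (Finset.range (s + 1)).filter (fun q => ¬ 2 * q < s),
        (s.choose q : ℝ) * p ^ q * (1 - p) ^ (s - q) ≤ (2 * r) ^ s := by
      have hterm : ∀ q ∈ (Finset.range (s + 1)).filter (fun q => ¬ 2 * q < s),
          (s.choose q : ℝ) * p ^ q * (1 - p) ^ (s - q) ≤ (s.choose q : ℝ) * r ^ s := by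
        intro q hq
        simp only [Finset.mem_filter, Finset.mem_range, not_lt] at hq
        obtain ⟨hq1, hq2⟩ := hq
        have hqs : q ≤ s := by omega
        have hqe : q = (s - q) + (2 * q - s) := by omega
        have hbound : p ^ q * (1 - p) ^ (s - q) ≤ r ^ s := by
          have h1 : p ^ q * (1 - p) ^ (s - q)
              = (p * (1 - p)) ^ (s - q) * p ^ (2 * q - s) := by
            rw [mul_pow]
            nth_rewrite 1 [hqe]
            rw [pow_add]; ring
          rw [h1, ← hr2, ← pow_mul]
          have h2 : p ^ (2 * q - s) ≤ r ^ (2 * q - s) :=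
            pow_le_pow_left₀ hp0 hpr _
          have h3 : (r ^ 2) ^ (s - q) * p ^ (2 * q - s)
              ≤ r ^ (2 * (s - q)) * r ^ (2 * q - s) := by
            rw [← pow_mul]
            exact mul_le_mul_of_nonneg_left h2 (pow_nonneg hr0 _)
          calc r ^ (2 * (s - q)) * p ^ (2 * q - s)
              ≤ r ^ (2 * (s - q)) * r ^ (2 * q - s) :=
                mul_le_mul_of_nonneg_left h2 (pow_nonneg hr0 _)
            _ = r ^ (2 * (s - q) + (2 * q - s)) := (pow_add r _ _).symm
            _ = r ^ s := by congr 1; omega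
        calc (s.choose q : ℝ) * p ^ q * (1 - p) ^ (s - q)
            = (s.choose q : ℝ) * (p ^ q * (1 - p) ^ (s - q)) := by ring
          _ ≤ (s.choose q : ℝ) * r ^ s :=
              mul_le_mul_of_nonneg_left hbound (Nat.cast_nonneg _)
      calc ∑ q ∈ (Finset.range (s + 1)).filter (fun q => ¬ 2 * q < s),
            (s.choose q : ℝ) * p ^ q * (1 - p) ^ (s - q)
          ≤ ∑ q ∈ (Finset.range (s + 1)).filter (fun q => ¬ 2 * q < s),
            (s.choose q : ℝ) * r ^ s := Finset.sum_le_sum hterm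
        _ ≤ ∑ q ∈ Finset.range (s + 1), (s.choose q : ℝ) * r ^ s := by
            apply Finset.sum_le_sum_of_subset_of_nonneg (Finset.filter_subset _ _)
            intro i _ _
            exact mul_nonneg (Nat.cast_nonneg _) (pow_nonneg hr0 _)
        _ = (2 : ℝ) ^ s * r ^ s := by
            rw [← Finset.sum_mul]
            congr 1
            rw [← Nat.cast_sum]
            rw [Nat.sum_range_choose]
            push_cast; ring
        _ = (2 * r) ^ s := (mul_pow 2 r s).symm
    have hhalf : (0 : ℝ) ≤ (if Even s then
        (1 / 2) * (s.choose (s / 2) : ℝ) * p ^ (s / 2) * (1 - p) ^ (s / 2) else 0) := by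
      split
      · positivity
      · exact le_refl 0
    linarith
  -- now the main estimate
  have hcoef : ∀ s ∈ Finset.range (N + 1),
      0 ≤ (N.choose s : ℝ) * ε ^ (N - s) * (1 - ε) ^ s := by
    intro s _
    have : (0:ℝ) ≤ 1 - ε := by linarith
    positivity
  have hmain : ∑ s ∈ Finset.range (N + 1),
      (N.choose s : ℝ) * ε ^ (N - s) * (1 - ε) ^ s * (1 - (2 * r) ^ s)
      ≤ ∑ s ∈ Finset.range (N + 1),
      (N.choose s : ℝ) * ε ^ (N - s) * (1 - ε) ^ s * PrEc s := by
    apply Finset.sum_le_sum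
    intro s hs
    exact mul_le_mul_of_nonneg_left (key s) (hcoef s hs)
  have heq : ∑ s ∈ Finset.range (N + 1),
      (N.choose s : ℝ) * ε ^ (N - s) * (1 - ε) ^ s * (1 - (2 * r) ^ s)
      = 1 - (ε + 2 * (1 - ε) * r) ^ N := by
    have e1 : ∑ s ∈ Finset.range (N + 1),
        (N.choose s : ℝ) * ε ^ (N - s) * (1 - ε) ^ s * (1 - (2 * r) ^ s)
        = (∑ s ∈ Finset.range (N + 1), (1 - ε) ^ s * ε ^ (N - s) * (N.choose s : ℝ))
          - ∑ s ∈ Finset.range (N + 1), ((1 - ε) * (2 * r)) ^ s * ε ^ (N - s) * (N.choose s : ℝ) := by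
      rw [← Finset.sum_sub_distrib]
      exact Finset.sum_congr rfl (fun s _ => by rw [mul_pow, mul_pow]; ring)
    rw [e1, ← add_pow (1 - ε) ε N, ← add_pow ((1 - ε) * (2 * r)) ε N]
    have : (1 - ε + ε : ℝ) = 1 := by ring
    rw [this, one_pow]
    congr 1
    ring
  rw [ge_iff_le, ← heq]
  exact hmain
end

section
/- Let 0 < u < 1, and let m_1,...,m_r and n_1,...,n_t be positive integers with ∑ m_i = m and ∑ n_j = n. Suppose u^(m_i·n_j) ≤ 1/2 for all i,j. Let s_* = min_{i,j} m_i·n_j. Then 1 - ∏_{i,j} (1 - u^(m_i n_j)) ≤ 1 - exp(-2·ln(2)·(m·n/s_*)·u^(s_*)) ≤ 2·ln(2)·(m·n/s_*)·u^(s_*). -/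
lemma aux_exp_le (x : ℝ) (hx0 : 0 ≤ x) (hx : x ≤ 1/2) :
    Real.exp (-(2 * Real.log 2 * x)) ≤ 1 - x := by
  have h := convexOn_exp.2 (Set.mem_univ (0:ℝ)) (Set.mem_univ (-Real.log 2))
      (show (0:ℝ) ≤ 1 - 2*x by linarith) (show (0:ℝ) ≤ 2*x by linarith)
      (show (1 - 2*x) + 2*x = 1 by ring)
  simp only [smul_eq_mul] at h
  have he : Real.exp (-Real.log 2) = 1/2 := by
    rw [Real.exp_neg, Real.exp_log (by norm_num : (0:ℝ) < 2)]; norm_num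
  rw [Real.exp_zero, he] at h
  have harg : (1 - 2*x) * 0 + 2*x * (-Real.log 2) = -(2 * Real.log 2 * x) := by ring
  rw [harg] at h
  linarith

theorem stmt_7 (u : ℝ) (hu0 : 0 < u) (hu1 : u < 1) (r t m n : ℕ)
    (ms : Fin r → ℕ) (ns : Fin t → ℕ)
    (hms : ∀ i, 0 < ms i) (hns : ∀ j, 0 < ns j)
    (hm : ∑ i, ms i = m) (hn : ∑ j, ns j = n)
    (hhalf : ∀ i j, u ^ (ms i * ns j) ≤ 1/2)
    (sstar : ℕ) (hsle : ∀ i j, sstar ≤ ms i * ns j)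
    (hsmem : ∃ i j, sstar = ms i * ns j) :
    1 - ∏ i, ∏ j, (1 - u ^ (ms i * ns j))
        ≤ 1 - Real.exp (-(2 * Real.log 2 * ((m * n : ℝ) / sstar) * u ^ sstar)) ∧
      1 - Real.exp (-(2 * Real.log 2 * ((m * n : ℝ) / sstar) * u ^ sstar))
        ≤ 2 * Real.log 2 * ((m * n : ℝ) / sstar) * u ^ sstar := by
  obtain ⟨i0, j0, hs⟩ := hsmem
  have hspos : 0 < sstar := by
    rw [hs]; exact Nat.mul_pos (hms i0) (hns j0)
  have hsR : (0:ℝ) < sstar := by exact_mod_cast hspos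
  have hlog2 : 0 < Real.log 2 := Real.log_pos (by norm_num)
  -- m*n = ∑∑ m_i n_j ≥ r*t*sstar
  have hmn : (∑ i, ms i) * (∑ j, ns j) = ∑ i, ∑ j, ms i * ns j :=
    Finset.sum_mul_sum _ _ _ _
  have hrt : r * t * sstar ≤ m * n := by
    rw [← hm, ← hn, hmn]
    calc r * t * sstar = ∑ _i : Fin r, ∑ _j : Fin t, sstar := by
          simp [Finset.sum_const, mul_assoc]
      _ ≤ ∑ i, ∑ j, ms i * ns j :=
          Finset.sum_le_sum fun i _ => Finset.sum_le_sum fun j _ => hsle i j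
  have hupos : ∀ k : ℕ, 0 < u ^ k := fun k => pow_pos hu0 k
  -- key: sum of u^(m_i n_j) ≤ (mn/s) u^s
  have hsum : ∑ i, ∑ j, u ^ (ms i * ns j) ≤ ((m * n : ℝ) / sstar) * u ^ sstar := by
    have h1 : ∑ i, ∑ j, u ^ (ms i * ns j) ≤ (r * t : ℝ) * u ^ sstar := by
      calc ∑ i, ∑ j, u ^ (ms i * ns j) ≤ ∑ _i : Fin r, ∑ _j : Fin t, u ^ sstar :=
            Finset.sum_le_sum fun i _ => Finset.sum_le_sum fun j _ =>
              pow_le_pow_of_le_one hu0.le hu1.le (hsle i j)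
        _ = (r * t : ℝ) * u ^ sstar := by
            simp [Finset.sum_const, mul_assoc]
    refine h1.trans ?_
    have : (r * t : ℝ) ≤ (m * n : ℝ) / sstar := by
      rw [le_div_iff₀ hsR]
      exact_mod_cast hrt
    exact mul_le_mul_of_nonneg_right this (hupos sstar).le
  set X := 2 * Real.log 2 * ((m * n : ℝ) / sstar) * u ^ sstar with hX
  have hX0 : 0 ≤ X := by
    have : (0:ℝ) ≤ (m * n : ℝ) / sstar := by positivity
    positivity
  constructor
  · -- first inequality
    have hprod : Real.exp (-X) ≤ ∏ i, ∏ j, (1 - u ^ (ms i * ns j)) := by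
      have step1 : Real.exp (-(2 * Real.log 2 * ∑ i, ∑ j, u ^ (ms i * ns j)))
          ≤ ∏ i, ∏ j, (1 - u ^ (ms i * ns j)) := by
        have : ∀ i : Fin r, Real.exp (-(2 * Real.log 2 * ∑ j, u ^ (ms i * ns j)))
            ≤ ∏ j, (1 - u ^ (ms i * ns j)) := by
          intro i
          calc Real.exp (-(2 * Real.log 2 * ∑ j, u ^ (ms i * ns j)))
              = ∏ j, Real.exp (-(2 * Real.log 2 * u ^ (ms i * ns j))) := by
                rw [← Real.exp_sum]; congr 1
                rw [Finset.mul_sum, ← Finset.sum_neg_distrib]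
            _ ≤ ∏ j, (1 - u ^ (ms i * ns j)) :=
                Finset.prod_le_prod (fun j _ => (Real.exp_pos _).le)
                  (fun j _ => aux_exp_le _ (hupos _).le (hhalf i j))
        calc Real.exp (-(2 * Real.log 2 * ∑ i, ∑ j, u ^ (ms i * ns j)))
            = ∏ i, Real.exp (-(2 * Real.log 2 * ∑ j, u ^ (ms i * ns j))) := by
              rw [← Real.exp_sum]; congr 1
              rw [Finset.mul_sum, ← Finset.sum_neg_distrib]
          _ ≤ ∏ i, ∏ j, (1 - u ^ (ms i * ns j)) :=
              Finset.prod_le_prod (fun i _ => (Real.exp_pos _).le) (fun i _ => this i)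
      refine le_trans ?_ step1
      apply Real.exp_le_exp.2
      have h2 : 2 * Real.log 2 * ∑ i, ∑ j, u ^ (ms i * ns j) ≤ X := by
        calc 2 * Real.log 2 * ∑ i, ∑ j, u ^ (ms i * ns j)
            ≤ 2 * Real.log 2 * ((m * n : ℝ) / sstar * u ^ sstar) :=
              mul_le_mul_of_nonneg_left hsum (by positivity)
          _ = X := by rw [hX]; ring
      linarith
    linarith
  · -- second: 1 - exp(-X) ≤ X
    have := Real.add_one_le_exp (-X)
    linarith
end

section
/- Let 0 < ε < 1 and 0 < δ < 1 be fixed. If s* ≤ (1-δ)·ln(m·n)/ln(1/ε), then 1 - exp(-(m·n/s*)·ε^(s*)) ≥ 1 - exp(-ln(1/ε)·(m·n)^δ / ((1-δ)·ln(m·n))), and this lower bound tends to 1 as m·n → ∞. -/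
open Real Filter

theorem stmt_10 (ε δ : ℝ) (hε0 : 0 < ε) (hε1 : ε < 1) (hδ0 : 0 < δ) (hδ1 : δ < 1) :
    (∀ m n sstar : ℝ, 1 < m * n → 0 < sstar →
        sstar ≤ (1 - δ) * Real.log (m * n) / Real.log (1 / ε) →
        1 - Real.exp (-((m * n / sstar) * ε ^ sstar))
          ≥ 1 - Real.exp (-(Real.log (1 / ε) * (m * n) ^ δ / ((1 - δ) * Real.log (m * n))))) ∧
      Filter.Tendsto
        (fun x : ℝ => 1 - Real.exp (-(Real.log (1 / ε) * x ^ δ / ((1 - δ) * Real.log x))))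
        Filter.atTop (nhds 1) := by
  have hlε : Real.log ε < 0 := Real.log_neg hε0 hε1
  have hlεne : Real.log ε ≠ 0 := ne_of_lt hlε
  have hε' : Real.log (1 / ε) = -Real.log ε := by rw [one_div, Real.log_inv]
  have hlogε : 0 < Real.log (1 / ε) := by rw [hε']; linarith
  have h1δ : 0 < 1 - δ := by linarith
  constructor
  · intro m n sstar hmn hs hsS
    set N := m * n with hN
    have hN0 : 0 < N := lt_trans one_pos hmn
    have hlogN : 0 < Real.log N := Real.log_pos hmn
    set S := (1 - δ) * Real.log N / Real.log (1 / ε) with hSdef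
    have hS0 : 0 < S := by positivity
    have key : (N / S) * ε ^ S ≤ (N / sstar) * ε ^ sstar := by
      apply mul_le_mul
      · exact div_le_div_of_nonneg_left hN0.le hs hsS
      · exact Real.rpow_le_rpow_of_exponent_ge hε0 hε1.le hsS
      · exact (Real.rpow_pos_of_pos hε0 S).le
      · positivity
    have hexp : Real.log ε * S = -((1 - δ) * Real.log N) := by
      rw [hSdef, hε']
      field_simp [hlεne]
    have heq : (N / S) * ε ^ S = Real.log (1 / ε) * N ^ δ / ((1 - δ) * Real.log N) := by
      rw [Real.rpow_def_of_pos hε0, Real.rpow_def_of_pos hN0, hexp]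
      have hNe : N * Real.exp (-((1 - δ) * Real.log N)) = Real.exp (Real.log N * δ) := by
        have h : Real.exp (Real.log N * δ)
            = Real.exp (Real.log N) * Real.exp (-((1 - δ) * Real.log N)) := by
          rw [← Real.exp_add]; congr 1; ring
        rw [h, Real.exp_log hN0]
      rw [div_mul_eq_mul_div, hNe, hSdef, hε', div_div_eq_mul_div]
      ring
    have hfinal : Real.log (1 / ε) * N ^ δ / ((1 - δ) * Real.log N)
        ≤ (N / sstar) * ε ^ sstar := heq ▸ key
    have := Real.exp_le_exp.mpr (neg_le_neg hfinal)
    linarith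
  · have h0 : Tendsto (fun x : ℝ => Real.log x / x ^ δ) atTop (nhds 0) :=
      (isLittleO_log_rpow_atTop hδ0).tendsto_div_nhds_zero
    have hpos : ∀ᶠ x : ℝ in atTop, 0 < Real.log x / x ^ δ := by
      filter_upwards [eventually_gt_atTop 1] with x hx
      have := Real.log_pos hx
      have : (0:ℝ) < x ^ δ := Real.rpow_pos_of_pos (lt_trans one_pos hx) δ
      positivity
    have h0' : Tendsto (fun x : ℝ => Real.log x / x ^ δ) atTop (nhdsWithin 0 (Set.Ioi 0)) :=
      tendsto_nhdsWithin_of_tendsto_nhds_of_eventually_within _ h0 hpos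
    have h1 : Tendsto (fun x : ℝ => (Real.log x / x ^ δ)⁻¹) atTop atTop :=
      h0'.inv_tendsto_nhdsGT_zero
    have h1' : Tendsto (fun x : ℝ => x ^ δ / Real.log x) atTop atTop := by
      apply h1.congr
      intro x; rw [inv_div]
    have hc : 0 < Real.log (1 / ε) / (1 - δ) := div_pos hlogε h1δ
    have h2 : Tendsto (fun x : ℝ => Real.log (1 / ε) * x ^ δ / ((1 - δ) * Real.log x))
        atTop atTop := by
      have := h1'.const_mul_atTop hc
      apply this.congr
      intro x
      field_simp
    have h3 : Tendsto (fun x : ℝ =>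
        Real.exp (-(Real.log (1 / ε) * x ^ δ / ((1 - δ) * Real.log x)))) atTop (nhds 0) :=
      Real.tendsto_exp_atBot.comp (tendsto_neg_atBot_iff.mpr h2)
    have h4 := (tendsto_const_nhds (x := (1:ℝ)) (f := Filter.atTop)).sub h3
    simpa using h4
end

section
/- With β = μ + δ·s/n, d₀ = μ + δ·α/n, and s ≥ α ≥ 0, we have n(d₀ - β) + n·d₀·ln(β/d₀) ≤ -δ²(s - α)²/(6(nμ + δα)). -/
/-!
Writing `β / d₀ = 1 + x` with `x = (β - d₀) / d₀`, the left-hand side is `n d₀ (log (1 + x) - x)`,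
and `log (1 + x) ≤ x - x² / 6` on `[0, 2]` turns it into `-n d₀ x² / 6`, which is the right-hand side
since `n (β - d₀) = δ (s - α)` and `n d₀ = n μ + δ α`.
-/

open Real

/-- Compare `1 + x` with the quadratic Taylor lower bound of `exp (x - x ^ 2 / 6)`; the difference
is `x ^ 2 (x ^ 2 - 12 x + 24) / 72`. -/
lemma Real.log_one_add_le_sub_sq_div_six {x : ℝ} (hx₀ : 0 ≤ x) (hx₂ : x ≤ 2) :
    log (1 + x) ≤ x - x ^ 2 / 6 := by
  rw [log_le_iff_le_exp (by linarith)]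
  have hy : 0 ≤ x - x ^ 2 / 6 := by nlinarith
  calc 1 + x ≤ 1 + (x - x ^ 2 / 6) + (x - x ^ 2 / 6) ^ 2 / 2 := by nlinarith [sq_nonneg x]
    _ ≤ exp (x - x ^ 2 / 6) := quadratic_le_exp_of_nonneg hy

lemma Real.sub_add_mul_log_div_le {d b : ℝ} (hd : 0 < d) (hdb : d ≤ b) (hb : b ≤ 3 * d) :
    d - b + d * log (b / d) ≤ -(b - d) ^ 2 / (6 * d) := by
  set x := (b - d) / d with hx
  have hx₀ : 0 ≤ x := div_nonneg (by linarith) hd.le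
  have hx₂ : x ≤ 2 := by rw [hx, div_le_iff₀ hd]; linarith
  have hbd : b / d = 1 + x := by rw [hx]; field_simp; ring
  have hlog := mul_le_mul_of_nonneg_left (log_one_add_le_sub_sq_div_six hx₀ hx₂) hd.le
  calc d - b + d * log (b / d) ≤ d - b + d * (x - x ^ 2 / 6) := by rw [hbd]; linarith
    _ = -(b - d) ^ 2 / (6 * d) := by rw [hx]; field_simp; ring

theorem stmt_15_general (μ δ n s α : ℝ) (hμ : 0 < μ) (hδ : 0 < δ) (hn : 0 < n)
    (hα : 0 ≤ α) (hαs : α ≤ s)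
    (β d₀ : ℝ) (hβ : β = μ + δ * s / n) (hd₀ : d₀ = μ + δ * α / n)
    (hx1 : δ * (s - α) / (n * μ + δ * α) ≤ 1) :
    n * (d₀ - β) + n * d₀ * Real.log (β / d₀)
      ≤ -(δ ^ 2 * (s - α) ^ 2) / (6 * (n * μ + δ * α)) := by
  have hD : 0 < n * μ + δ * α := by positivity
  have hnd₀ : n * d₀ = n * μ + δ * α := by rw [hd₀]; field_simp
  have hβd₀ : n * (β - d₀) = δ * (s - α) := by rw [hβ, hd₀]; field_simp; ring
  have hd₀_pos : 0 < d₀ := by nlinarith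
  have hd₀β : d₀ ≤ β := by nlinarith
  have hβ_le : β ≤ 3 * d₀ := by
    rw [div_le_one hD, ← hβd₀, ← hnd₀] at hx1
    nlinarith
  have hbound := mul_le_mul_of_nonneg_left (sub_add_mul_log_div_le hd₀_pos hd₀β hβ_le) hn.le
  calc n * (d₀ - β) + n * d₀ * Real.log (β / d₀)
      = n * (d₀ - β + d₀ * Real.log (β / d₀)) := by ring
    _ ≤ n * (-(β - d₀) ^ 2 / (6 * d₀)) := hbound
    _ = -(n * (β - d₀)) ^ 2 / (6 * (n * d₀)) := by field_simp
    _ = -(δ ^ 2 * (s - α) ^ 2) / (6 * (n * μ + δ * α)) := by rw [hβd₀, hnd₀]; ring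

theorem stmt_15 (μ δ n s α : ℝ) (hμ : 0 < μ) (hδ : 0 < δ) (hn : 0 < n)
    (hα : 0 ≤ α) (hαs : α ≤ s) (hsn : s ≤ n)
    (β d₀ : ℝ) (hβ : β = μ + δ * s / n) (hd₀ : d₀ = μ + δ * α / n)
    (hx1 : δ * (s - α) / (n * μ + δ * α) ≤ 1) :
    n * (d₀ - β) + n * d₀ * Real.log (β / d₀)
      ≤ -(δ ^ 2 * (s - α) ^ 2) / (6 * (n * μ + δ * α)) :=
  stmt_15_general μ δ n s α hμ hδ hn hα hαs β d₀ hβ hd₀ hx1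
end

section
/- Let X be Binomial(t, 1/2), n₀ ≥ 1 and c > 0, with n = n₀·t. Then E[exp(-c·n₀·(X - t/3)²/t)] ≤ exp(-c·n/81) + t·2^(-t·(1 - h(4/9))), where h is the binary entropy function (base 2). -/
/-- The binary entropy function (base 2). -/
noncomputable def binEnt (x : ℝ) : ℝ := -x * Real.logb 2 x - (1 - x) * Real.logb 2 (1 - x)

lemma binEnt_eq (x : ℝ) : binEnt x = Real.binEntropy x / Real.log 2 := by
  simp only [binEnt, Real.binEntropy, Real.logb, Real.log_inv]
  ring

lemma binEnt_mono {x : ℝ} (h0 : 0 ≤ x) (h1 : x ≤ 4/9) : binEnt x ≤ binEnt (4/9) := by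
  rw [binEnt_eq, binEnt_eq]
  have hlog : (0:ℝ) < Real.log 2 := Real.log_pos (by norm_num)
  gcongr
  exact Real.binEntropy_strictMonoOn.monotoneOn ⟨h0, by norm_num; linarith⟩
    ⟨by norm_num, by norm_num⟩ h1

lemma choose_le_ent (t s : ℕ) (h0 : 0 < s) (h1 : s < t) :
    (t.choose s : ℝ) ≤ 2 ^ ((t:ℝ) * binEnt (s/t)) := by
  have ht : (0:ℝ) < t := by exact_mod_cast h0.trans h1
  set p : ℝ := (s:ℝ)/t with hp
  have hp0 : 0 < p := by positivity
  have hp1 : p < 1 := by rw [hp, div_lt_one ht]; exact_mod_cast h1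
  have hq0 : 0 < 1 - p := by linarith
  have key : (t.choose s : ℝ) * (p^s * (1-p)^(t-s)) ≤ 1 := by
    have h := Finset.single_le_sum (f := fun k => p ^ k * (1-p) ^ (t - k) * (t.choose k : ℝ))
      (fun i _ => by positivity) (Finset.mem_range.mpr (Nat.lt_succ_of_lt h1))
    calc (t.choose s : ℝ) * (p^s * (1-p)^(t-s)) = p^s * (1-p)^(t-s) * t.choose s := by ring
      _ ≤ ∑ k ∈ Finset.range (t+1), p^k*(1-p)^(t-k)*(t.choose k:ℝ) := h
      _ = (p + (1-p))^t := (add_pow p (1-p) t).symm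
      _ = 1 := by norm_num
  have hA : 0 < p^s * (1-p)^(t-s) := mul_pos (pow_pos hp0 _) (pow_pos hq0 _)
  have hinv : (t.choose s:ℝ) ≤ (p^s*(1-p)^(t-s))⁻¹ := by
    rw [← one_div, le_div_iff₀ hA]; exact key
  refine hinv.trans_eq ?_
  have e1 : p^s = Real.exp ((s:ℝ) * Real.log p) := by
    rw [Real.exp_nat_mul, Real.exp_log hp0]
  have e2 : (1-p)^(t-s) = Real.exp (((t-s:ℕ):ℝ) * Real.log (1-p)) := by
    rw [Real.exp_nat_mul, Real.exp_log hq0]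
  rw [e1, e2, ← Real.exp_add, ← Real.exp_neg, Real.rpow_def_of_pos (by norm_num : (0:ℝ) < 2)]
  congr 1
  have hcast : ((t-s:ℕ):ℝ) = (t:ℝ) - s := by
    rw [Nat.cast_sub h1.le]
  rw [hcast]
  have hlog2 : Real.log 2 ≠ 0 := ne_of_gt (Real.log_pos (by norm_num))
  simp only [binEnt, Real.logb, hp]
  field_simp
  ring



theorem stmt_17 (t n₀ n : ℕ) (ht : 0 < t) (hn₀ : 1 ≤ n₀) (hn : n = n₀ * t)
    (c : ℝ) (hc : 0 < c) :
    -- X ~ Binomial(t, 1/2); E[exp(-c n₀ (X - t/3)² / t)]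
    ∑ s ∈ Finset.range (t + 1),
        (t.choose s : ℝ) * (1 / 2) ^ t *
          Real.exp (-(c * n₀ * ((s : ℝ) - t / 3) ^ 2 / t))
      ≤ Real.exp (-(c * n / 81)) + t * (2 : ℝ) ^ (-(t : ℝ) * (1 - binEnt (4 / 9))) := by
  classical
  have ht' : (0:ℝ) < t := by exact_mod_cast ht
  have hn₀' : (1:ℝ) ≤ n₀ := by exact_mod_cast hn₀
  set E := Real.exp (-(c * n / 81)) with hE
  set B := (2:ℝ) ^ (-(t:ℝ) * (1 - binEnt (4/9))) with hB
  have hB0 : 0 ≤ B := le_of_lt (Real.rpow_pos_of_pos (by norm_num) _)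
  set P : ℕ → Prop := fun s => 2*(t:ℝ)/9 ≤ s ∧ (s:ℝ) ≤ 4*(t:ℝ)/9 with hP
  set f : ℕ → ℝ := fun s => (t.choose s : ℝ) * (1 / 2) ^ t *
          Real.exp (-(c * n₀ * ((s : ℝ) - t / 3) ^ 2 / t)) with hf
  have hsplit := Finset.sum_filter_add_sum_filter_not (Finset.range (t+1)) P f
  rw [← hsplit, add_comm]
  have hsum1 : ∑ s ∈ Finset.range (t+1), (t.choose s:ℝ)*(1/2)^t = 1 := by
    rw [← Finset.sum_mul]
    have h2 : ∑ s ∈ Finset.range (t+1), (t.choose s:ℝ) = 2^t := by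
      exact_mod_cast Nat.sum_range_choose t
    rw [h2]
    simp [one_div, inv_pow]
  refine add_le_add ?_ ?_
  · -- ¬P part ≤ E
    have hterm : ∀ s ∈ (Finset.range (t+1)).filter (fun s => ¬ P s),
        f s ≤ (t.choose s:ℝ)*(1/2)^t * E := by
      intro s hs
      rw [Finset.mem_filter] at hs
      have hnp := hs.2
      have hsq : ((t:ℝ)/9)^2 ≤ ((s:ℝ) - t/3)^2 := by
        rcases not_and_or.mp hnp with h | h
        · push_neg at h
          nlinarith
        · push_neg at h
          nlinarith
      have hexp : Real.exp (-(c * n₀ * ((s : ℝ) - t / 3) ^ 2 / t)) ≤ E := by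
        rw [hE, Real.exp_le_exp, neg_le_neg_iff]
        rw [div_le_div_iff₀ (by norm_num) ht']
        have hncast : (n:ℝ) = (n₀:ℝ) * t := by rw [hn]; push_cast; ring
        rw [hncast]
        nlinarith [mul_le_mul_of_nonneg_left hsq (mul_nonneg hc.le (by linarith : (0:ℝ) ≤ (n₀:ℝ)))]
      exact mul_le_mul_of_nonneg_left hexp (by positivity)
    calc ∑ s ∈ (Finset.range (t+1)).filter (fun s => ¬ P s), f s
        ≤ ∑ s ∈ (Finset.range (t+1)).filter (fun s => ¬ P s), (t.choose s:ℝ)*(1/2)^t * E :=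
          Finset.sum_le_sum hterm
      _ = (∑ s ∈ (Finset.range (t+1)).filter (fun s => ¬ P s), (t.choose s:ℝ)*(1/2)^t) * E := by
          rw [Finset.sum_mul]
      _ ≤ 1 * E := by
          refine mul_le_mul_of_nonneg_right ?_ (Real.exp_pos _).le
          calc ∑ s ∈ (Finset.range (t+1)).filter (fun s => ¬ P s), (t.choose s:ℝ)*(1/2)^t
              ≤ ∑ s ∈ Finset.range (t+1), (t.choose s:ℝ)*(1/2)^t :=
                Finset.sum_le_sum_of_subset_of_nonneg (Finset.filter_subset _ _)
                  (fun i _ _ => by positivity)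
            _ = 1 := hsum1
      _ = E := one_mul E
  · -- P part ≤ t * B
    have hterm : ∀ s ∈ (Finset.range (t+1)).filter P, f s ≤ B := by
      intro s hs
      rw [Finset.mem_filter] at hs
      obtain ⟨-, h1, h2⟩ := hs
      have hs0 : 0 < s := by
        rcases Nat.eq_zero_or_pos s with rfl | h
        · exfalso; simp at h1; linarith
        · exact h
      have hst : s < t := by
        have : (s:ℝ) < t := by linarith
        exact_mod_cast this
      have hc1 : (t.choose s : ℝ) ≤ 2 ^ ((t:ℝ) * binEnt (s/t)) := choose_le_ent t s hs0 hst
      have hexp1 : Real.exp (-(c * n₀ * ((s : ℝ) - t / 3) ^ 2 / t)) ≤ 1 := by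
        apply Real.exp_le_one_iff.mpr
        have : 0 ≤ c * n₀ * ((s : ℝ) - t / 3) ^ 2 / t := by positivity
        linarith
      have h12 : ((1:ℝ)/2)^t = (2:ℝ)^(-(t:ℝ)) := by
        rw [Real.rpow_neg (by norm_num), Real.rpow_natCast]
        simp [one_div, inv_pow]
      calc f s ≤ (t.choose s : ℝ) * (1/2)^t * 1 :=
            mul_le_mul_of_nonneg_left hexp1 (by positivity)
        _ = (t.choose s : ℝ) * (1/2)^t := mul_one _
        _ ≤ 2 ^ ((t:ℝ) * binEnt (s/t)) * (1/2)^t :=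
            mul_le_mul_of_nonneg_right hc1 (by positivity)
        _ = 2 ^ ((t:ℝ) * binEnt (s/t) + (-(t:ℝ))) := by
            rw [h12, ← Real.rpow_add (by norm_num)]
        _ ≤ 2 ^ ((t:ℝ) * binEnt (4/9) + (-(t:ℝ))) := by
            refine (Real.rpow_le_rpow_left_iff (by norm_num : (1:ℝ) < 2)).mpr ?_
            have hmem : (s:ℝ)/t ≤ 4/9 := by
              rw [div_le_iff₀ ht']; linarith
            have hbm := binEnt_mono (by positivity) hmem
            nlinarith
        _ = B := by rw [hB]; ring_nf
    have hcard : ((Finset.range (t+1)).filter P).card ≤ t := by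
      have hsub : (Finset.range (t+1)).filter P ⊆ (Finset.range (t+1)).erase 0 := by
        intro s hs
        rw [Finset.mem_filter] at hs
        obtain ⟨hmem, h1, -⟩ := hs
        rw [Finset.mem_erase]
        refine ⟨?_, hmem⟩
        rintro rfl
        simp at h1
        linarith
      calc ((Finset.range (t+1)).filter P).card ≤ ((Finset.range (t+1)).erase 0).card :=
            Finset.card_le_card hsub
        _ = t := by rw [Finset.card_erase_of_mem (by simp), Finset.card_range]; omega
    calc ∑ s ∈ (Finset.range (t+1)).filter P, f s
        ≤ ((Finset.range (t+1)).filter P).card • B := Finset.sum_le_card_nsmul _ _ _ hterm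
      _ = (((Finset.range (t+1)).filter P).card : ℝ) * B := nsmul_eq_mul _ _
      _ ≤ (t:ℝ) * B := by
          refine mul_le_mul_of_nonneg_right ?_ hB0
          exact_mod_cast hcard
end
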